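/- arXiv:1009.6105 — 3 statements merged into one kernel-verified Lean document; each statement's English description precedes it below -/
import Mathlib

section
/- The function p_𝒞(f,g) = Σ_{n=1}^∞ 2^{-n} max(1/f(n), 1/g(n)) is a partial metric on the complexity space 𝒞, and the quasi-metric it induces via d_{p_𝒞}(f,g) = p_𝒞(f,g) - p_𝒞(f,f) equals the complexity quasi-metric d_𝒞(f,g) = Σ_{n=1}^∞ 2^{-n} max(1/g(n) - 1/f(n), 0). -/
open scoped NNReal ENNReal

/-- Membership in the complexity space `𝒞`. -/
def memC (f : ℕ+ → ℝ≥0∞) : Prop :=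
  (∀ n, 0 < f n) ∧ (∑' n : ℕ+, (2 : ℝ≥0∞)⁻¹ ^ (n : ℕ) * (f n)⁻¹) ≠ ⊤

/-- The complexity distance `d_𝒞(f,g) = Σ_{n=1}^∞ 2^{-n} max(1/g(n) - 1/f(n), 0)`. -/
noncomputable def dC (f g : ℕ+ → ℝ≥0∞) : ℝ≥0∞ :=
  ∑' n : ℕ+, (2 : ℝ≥0∞)⁻¹ ^ (n : ℕ) * ((g n)⁻¹ - (f n)⁻¹)

/-- `p_𝒞(f,g) = Σ_{n=1}^∞ 2^{-n} max(1/f(n), 1/g(n))`. -/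
noncomputable def pC (f g : ℕ+ → ℝ≥0∞) : ℝ≥0∞ :=
  ∑' n : ℕ+, (2 : ℝ≥0∞)⁻¹ ^ (n : ℕ) * max (f n)⁻¹ (g n)⁻¹

lemma cpow_ne_zero (n : ℕ+) : (2 : ℝ≥0∞)⁻¹ ^ (n : ℕ) ≠ 0 :=
  pow_ne_zero _ (ENNReal.inv_ne_zero.2 (by norm_num))

lemma cpow_ne_top (n : ℕ+) : (2 : ℝ≥0∞)⁻¹ ^ (n : ℕ) ≠ ⊤ :=
  ENNReal.pow_ne_top (ENNReal.inv_ne_top.2 (by norm_num))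

lemma pC_self (f : ℕ+ → ℝ≥0∞) :
    pC f f = ∑' n : ℕ+, (2 : ℝ≥0∞)⁻¹ ^ (n : ℕ) * (f n)⁻¹ := by
  simp [pC]

lemma my_tsum_sub {ι : Type*} {a b : ι → ℝ≥0∞} (hle : ∀ n, a n ≤ b n)
    (hfin : ∑' n, a n ≠ ⊤) : ∑' n, (b n - a n) = ∑' n, b n - ∑' n, a n := by
  refine ENNReal.eq_sub_of_add_eq hfin ?_
  rw [← ENNReal.tsum_add]
  exact tsum_congr fun n => tsub_add_cancel_of_le (hle n)

lemma tsum_eq_pointwise {a b : ℕ+ → ℝ≥0∞} (hle : ∀ n, a n ≤ b n)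
    (heq : ∑' n, a n = ∑' n, b n) (hfin : ∑' n, a n ≠ ⊤) : ∀ n, a n = b n := by
  have hsub : ∑' n, (b n - a n) = ∑' n, b n - ∑' n, a n :=
    my_tsum_sub hle hfin
  rw [← heq, tsub_self] at hsub
  intro n
  have := (ENNReal.tsum_eq_zero.1 hsub) n
  exact le_antisymm (hle n) (tsub_eq_zero_iff_le.1 this)

/-- `p_𝒞` is a partial metric on `𝒞` (finite-valued on `𝒞`,
separating, small self-distances, symmetric, triangle), and the quasi-metric
it induces, `p_𝒞(f,g) - p_𝒞(f,f)`, equals the complexity quasi-metric `d_𝒞`. -/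
theorem baire_stmt4 :
    (∀ f g : ℕ+ → ℝ≥0∞, memC f → memC g → pC f g ≠ ⊤) ∧
      (∀ f g : ℕ+ → ℝ≥0∞, memC f → memC g →
        ((pC f f = pC f g ∧ pC f g = pC g g) ↔ f = g)) ∧
      (∀ f g : ℕ+ → ℝ≥0∞, memC f → memC g → pC f f ≤ pC f g) ∧
      (∀ f g : ℕ+ → ℝ≥0∞, memC f → memC g → pC f g = pC g f) ∧
      (∀ f g h : ℕ+ → ℝ≥0∞, memC f → memC g → memC h →
        pC f g + pC h h ≤ pC f h + pC h g) ∧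
      (∀ f g : ℕ+ → ℝ≥0∞, memC f → memC g → pC f g - pC f f = dC f g) := by
  have hself_le : ∀ f g : ℕ+ → ℝ≥0∞, pC f f ≤ pC f g := by
    intro f g
    rw [pC_self]
    exact ENNReal.tsum_le_tsum fun n =>
      mul_le_mul_right (le_max_left _ _) _
  have hfin : ∀ f g : ℕ+ → ℝ≥0∞, memC f → memC g → pC f g ≠ ⊤ := by
    intro f g hf hg
    have h1 : pC f g ≤ (∑' n : ℕ+, (2 : ℝ≥0∞)⁻¹ ^ (n : ℕ) * (f n)⁻¹)
        + ∑' n : ℕ+, (2 : ℝ≥0∞)⁻¹ ^ (n : ℕ) * (g n)⁻¹ := by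
      rw [← ENNReal.tsum_add]
      refine ENNReal.tsum_le_tsum fun n => ?_
      rw [← mul_add]
      exact mul_le_mul_right (max_le le_self_add le_add_self) _
    exact fun h => (ENNReal.add_ne_top.2 ⟨hf.2, hg.2⟩)
      (top_le_iff.1 (h ▸ h1))
  refine ⟨hfin, ?_, fun f g _ _ => hself_le f g, ?_, ?_, ?_⟩
  · -- separation
    intro f g hf hg
    constructor
    · rintro ⟨h1, h2⟩
      funext n
      have e1 := tsum_eq_pointwise
        (fun n => mul_le_mul_right (le_max_left _ _) _)
        ((pC_self f).symm.trans h1) hf.2 n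
      have e2 := tsum_eq_pointwise
        (fun n => mul_le_mul_right (le_max_right _ _) _)
        ((pC_self g).symm.trans h2.symm) hg.2 n
      have c1 : (f n)⁻¹ = max (f n)⁻¹ (g n)⁻¹ :=
        (ENNReal.mul_right_inj (cpow_ne_zero n) (cpow_ne_top n)).1 e1
      have c2 : (g n)⁻¹ = max (f n)⁻¹ (g n)⁻¹ :=
        (ENNReal.mul_right_inj (cpow_ne_zero n) (cpow_ne_top n)).1 e2
      have : (f n)⁻¹ = (g n)⁻¹ := c1.trans c2.symm
      rw [← inv_inv (f n), this, inv_inv]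
    · rintro rfl; exact ⟨rfl, rfl⟩
  · -- symmetry
    intro f g _ _
    simp [pC, max_comm]
  · -- triangle
    intro f g h _ _ _
    rw [pC_self, pC, pC, pC, ← ENNReal.tsum_add, ← ENNReal.tsum_add]
    refine ENNReal.tsum_le_tsum fun n => ?_
    rw [← mul_add, ← mul_add]
    refine mul_le_mul_right ?_ _
    set a := (f n)⁻¹; set b := (g n)⁻¹; set c := (h n)⁻¹
    rcases le_total a b with hab | hab
    · rw [max_eq_right hab]
      calc b + c ≤ max c b + max a c :=
            add_le_add (le_max_right _ _) (le_max_right _ _)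
        _ = max a c + max c b := add_comm _ _
    · rw [max_eq_left hab]
      exact add_le_add (le_max_left _ _) (le_max_left _ _)
  · -- induced quasi-metric
    intro f g hf _
    have key : ∑' n : ℕ+, ((2 : ℝ≥0∞)⁻¹ ^ (n : ℕ) * max (f n)⁻¹ (g n)⁻¹
          - (2 : ℝ≥0∞)⁻¹ ^ (n : ℕ) * (f n)⁻¹)
        = (∑' n : ℕ+, (2 : ℝ≥0∞)⁻¹ ^ (n : ℕ) * max (f n)⁻¹ (g n)⁻¹)
          - ∑' n : ℕ+, (2 : ℝ≥0∞)⁻¹ ^ (n : ℕ) * (f n)⁻¹ :=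
      my_tsum_sub (fun n => mul_le_mul_right (le_max_left _ _) _) hf.2
    rw [pC_self, pC, dC, ← key]
    refine tsum_congr fun n => ?_
    rw [← ENNReal.mul_sub (fun _ _ => cpow_ne_top n)]
    congr 1
    rcases le_total (g n)⁻¹ (f n)⁻¹ with hle | hle
    · rw [max_eq_left hle, tsub_self, tsub_eq_zero_of_le hle]
    · rw [max_eq_right hle]
end

section
/- Let (X,p) be a complete partial metric space and f : X → X a mapping such that there is s with 0 ≤ s < 1 and p(f(x), f(y)) ≤ s·p(x,y) for all x, y ∈ X. Then f has a unique fixed point x*, and p(x*, x*) = 0. (Matthews fixed point theorem.) -/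
open scoped NNReal
open Filter Topology Function

/-!
Picard iteration `xₙ = fⁿ x₀` gives `p(xₙ, xₘ) ≤ s^{min n m} · p(x₀, f x₀)/(1 - s)`, so the orbit is
Cauchy with `lim p(xₙ, xₘ) = 0`, and completeness yields a limit `l` with `p(l, l) = 0` and
`p(l, xₙ) → 0`. Then `p(f l, l) ≤ s · p(l, xₙ) + p(l, xₙ₊₁) → 0`, and a partial distance `0`
forces equality. Two fixed points `x, y` satisfy `p(x, y) ≤ s · p(x, y)`, hence `p(x, y) = 0`.
-/

namespace PartialMetric

variable {X : Type*} {p : X → X → ℝ≥0}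

theorem eq_of_eq_zero (h1 : ∀ x y, p x x = p x y ∧ p x y = p y y → x = y)
    (h2 : ∀ x y, p x x ≤ p x y) (h3 : ∀ x y, p x y = p y x) {x y : X} (h : p x y = 0) :
    x = y := by
  have hxx : p x x = 0 := le_antisymm (h ▸ h2 x y) zero_le
  have hyy : p y y = 0 := le_antisymm (h ▸ h3 x y ▸ h2 y x) zero_le
  exact h1 x y ⟨hxx.trans h.symm, h.trans hyy.symm⟩

variable {f : X → X} {s : ℝ≥0} (hcontr : ∀ x y, p (f x) (f y) ≤ s * p x y)
include hcontr

theorem iterate_le_pow_mul (n : ℕ) (x y : X) : p (f^[n] x) (f^[n] y) ≤ s ^ n * p x y := by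
  induction n generalizing x y with
  | zero => simp
  | succ n ih =>
    calc p (f^[n + 1] x) (f^[n + 1] y) = p (f^[n] (f x)) (f^[n] (f y)) := rfl
      _ ≤ s ^ n * p (f x) (f y) := ih _ _
      _ ≤ s ^ n * (s * p x y) := mul_le_mul_right (hcontr x y) _
      _ = s ^ (n + 1) * p x y := by ring

theorem orbit_le_div_one_sub (h2 : ∀ x y, p x x ≤ p x y)
    (htri : ∀ x y z, p x y ≤ p x z + p z y) (hs : s < 1)
    (x : X) (m : ℕ) : p x (f^[m] x) ≤ p x (f x) / (1 - s) := by
  set C := p x (f x) / (1 - s)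
  have hC : p x (f x) + s * C = C := by
    have h1s : (1 : ℝ≥0) - s ≠ 0 := (tsub_pos_of_lt hs).ne'
    calc p x (f x) + s * C = (1 - s) * C + s * C := by rw [mul_div_cancel₀ _ h1s]
      _ = C := by rw [← add_mul, tsub_add_cancel_of_le hs.le, one_mul]
  induction m with
  | zero => exact (h2 x (f x)).trans (hC ▸ le_self_add)
  | succ m ih =>
    calc p x (f^[m + 1] x) ≤ p x (f x) + p (f x) (f (f^[m] x)) := by
          rw [iterate_succ_apply']; exact htri _ _ _
      _ ≤ p x (f x) + s * C := by gcongr; exact (hcontr _ _).trans (mul_le_mul_right ih s)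
      _ = C := hC

theorem tendsto_orbit_zero (h2 : ∀ x y, p x x ≤ p x y) (h3 : ∀ x y, p x y = p y x)
    (htri : ∀ x y z, p x y ≤ p x z + p z y) (hs : s < 1) (x : X) :
    Tendsto (fun mn : ℕ × ℕ => p (f^[mn.1] x) (f^[mn.2] x)) atTop (𝓝 0) := by
  set C := p x (f x) / (1 - s)
  have hle : ∀ n m, n ≤ m → p (f^[n] x) (f^[m] x) ≤ s ^ n * C := by
    intro n m hnm
    obtain ⟨k, rfl⟩ := Nat.exists_eq_add_of_le hnm
    calc p (f^[n] x) (f^[n + k] x) = p (f^[n] x) (f^[n] (f^[k] x)) := by rw [iterate_add_apply]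
      _ ≤ s ^ n * p x (f^[k] x) := iterate_le_pow_mul hcontr n _ _
      _ ≤ s ^ n * C := mul_le_mul_right (orbit_le_div_one_sub hcontr h2 htri hs x k) _
  have hbound : ∀ mn : ℕ × ℕ, p (f^[mn.1] x) (f^[mn.2] x) ≤ s ^ min mn.1 mn.2 * C := by
    rintro ⟨n, m⟩
    rcases le_total n m with h | h
    · simpa [min_eq_left h] using hle n m h
    · simpa [min_eq_right h, h3] using hle m n h
  have hmin : Tendsto (fun mn : ℕ × ℕ => min mn.1 mn.2) atTop atTop :=
    tendsto_atTop_atTop_of_monotone (fun _ _ h => min_le_min h.1 h.2) fun b => ⟨(b, b), by simp⟩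
  have hpow : Tendsto (fun mn : ℕ × ℕ => s ^ min mn.1 mn.2 * C) atTop (𝓝 0) := by
    simpa using ((NNReal.tendsto_pow_atTop_nhds_zero_of_lt_one hs).comp hmin).mul_const C
  exact tendsto_of_tendsto_of_tendsto_of_le_of_le tendsto_const_nhds hpow (fun _ => zero_le) hbound

theorem apply_eq_zero_of_tendsto_orbit (h3 : ∀ x y, p x y = p y x)
    (htri : ∀ x y z, p x y ≤ p x z + p z y) {x l : X}
    (hl : Tendsto (fun n => p l (f^[n] x)) atTop (𝓝 0)) : p (f l) l = 0 := by
  have hbound : ∀ n, p (f l) l ≤ s * p l (f^[n] x) + p l (f^[n + 1] x) := fun n =>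
    calc p (f l) l ≤ p (f l) (f^[n + 1] x) + p (f^[n + 1] x) l := htri _ _ _
      _ ≤ s * p l (f^[n] x) + p l (f^[n + 1] x) := by
        rw [iterate_succ_apply', h3 _ l]; gcongr; exact hcontr _ _
  have hlim : Tendsto (fun n => s * p l (f^[n] x) + p l (f^[n + 1] x)) atTop (𝓝 0) := by
    simpa using (hl.const_mul s).add (hl.comp (tendsto_add_atTop_nat 1))
  exact le_antisymm (ge_of_tendsto' hlim hbound) zero_le

theorem eq_zero_of_isFixedPt (hs : s < 1) {x y : X} (hx : IsFixedPt f x)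
    (hy : IsFixedPt f y) : p x y = 0 := by
  by_contra hne
  have hle : p x y ≤ s * p x y := by simpa [hx.eq, hy.eq] using hcontr x y
  exact (mul_lt_of_lt_one_left (pos_iff_ne_zero.2 hne) hs).not_ge hle

end PartialMetric

/-- Matthews fixed point theorem: a contraction on a complete
partial metric space has a unique fixed point `x*`, and `p(x*,x*) = 0`.
Completeness: every Cauchy sequence (i.e. one for which `lim_{n,m} p(xₙ,xₘ)`
exists) converges in the topology of `p` to a point `l` with
`p(l,l) = lim_{n,m} p(xₙ,xₘ)`. -/
theorem baire_stmt6 {X : Type*} [Nonempty X] (p : X → X → ℝ≥0)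
    (h1 : ∀ x y, (p x x = p x y ∧ p x y = p y y) ↔ x = y)
    (h2 : ∀ x y, p x x ≤ p x y)
    (h3 : ∀ x y, p x y = p y x)
    (h4 : ∀ x y z, p x y + p z z ≤ p x z + p z y)
    (hcomp : ∀ (x : ℕ → X) (L : ℝ≥0),
      Filter.Tendsto (fun mn : ℕ × ℕ => p (x mn.1) (x mn.2)) Filter.atTop (nhds L) →
      ∃ l : X, p l l = L ∧
        ∀ ε : ℝ≥0, 0 < ε → ∃ N, ∀ n, N ≤ n → p l (x n) < p l l + ε)
    (f : X → X) (s : ℝ≥0) (hs : s < 1)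
    (hcontr : ∀ x y, p (f x) (f y) ≤ s * p x y) :
    ∃ x, f x = x ∧ p x x = 0 ∧ ∀ y, f y = y → y = x := by
  obtain ⟨x₀⟩ := ‹Nonempty X›
  have htri : ∀ x y z, p x y ≤ p x z + p z y := fun x y z => le_self_add.trans (h4 x y z)
  have heq : ∀ {x y}, p x y = 0 → x = y :=
    PartialMetric.eq_of_eq_zero (fun x y => (h1 x y).1) h2 h3
  obtain ⟨l, hll, hconv⟩ :=
    hcomp (fun n => f^[n] x₀) 0 (PartialMetric.tendsto_orbit_zero hcontr h2 h3 htri hs x₀)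
  have hl : Tendsto (fun n => p l (f^[n] x₀)) atTop (𝓝 0) :=
    tendsto_order.2 ⟨fun _ h => absurd h not_lt_zero,
      fun ε hε => eventually_atTop.2 (by simpa [hll] using hconv ε hε)⟩
  have hfix : f l = l := heq (PartialMetric.apply_eq_zero_of_tendsto_orbit hcontr h3 htri hl)
  exact ⟨l, hfix, hll, fun y hy => heq (PartialMetric.eq_zero_of_isFixedPt hcontr hs hy hfix)⟩
end

section
/- Let f be a mapping from a complete partial quasi-metric space (X,q) into itself with q(f(x), f(y)) ≤ s·q(x,y) for all x,y ∈ X, for some 0 ≤ s < 1. If x* is the (unique) fixed point of f and y ∈ X satisfies d_q(f(y), y) = 0 (i.e., q(f(y),y) = q(f(y),f(y))), then d_q(x*, y) = 0 (i.e., q(x*, y) = q(x*, x*)). -/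
open scoped NNReal

/-!
Since `d_q(f y, y) = 0`, the triangle inequality through `f y` gives
`q(x*, y) ≤ q(x*, f y) = q(f x*, f y) ≤ s · q(x*, y)`, which forces `q(x*, y) = 0 = q(x*, x*)`
because `s < 1`.
-/

theorem NNReal.eq_zero_of_le_mul_of_lt_one {a s : ℝ≥0} (hs : s < 1) (h : a ≤ s * a) :
    a = 0 := by
  by_contra ha
  exact (mul_lt_of_lt_one_left (pos_iff_ne_zero.mpr ha) hs).not_ge h

theorem le_of_triangle_of_eq_self {X : Type*} {q : X → X → ℝ≥0}
    (htri : ∀ x y z, q x y + q z z ≤ q x z + q z y) {x y z : X} (hzy : q z y = q z z) :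
    q x y ≤ q x z := by
  have h := htri x y z
  rw [hzy] at h
  exact le_of_add_le_add_right h

theorem Function.IsFixedPt.le_mul_of_contracting {X : Type*} {q : X → X → ℝ≥0} {f : X → X}
    {s : ℝ≥0} (hcontr : ∀ x y, q (f x) (f y) ≤ s * q x y) {xs : X} (hfix : IsFixedPt f xs)
    (y : X) :
    q xs (f y) ≤ s * q xs y := by
  simpa only [hfix.eq] using hcontr xs y

theorem baire_stmt14_general {X : Type*} (q : X → X → ℝ≥0)
    (h3 : ∀ x y z, q x y + q z z ≤ q x z + q z y)
    (f : X → X) (s : ℝ≥0) (hs : s < 1)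
    (hcontr : ∀ x y, q (f x) (f y) ≤ s * q x y)
    (xs : X) (hfix : f xs = xs) (hq0 : q xs xs = 0)
    (y : X) (hy : q (f y) y = q (f y) (f y)) :
    q xs y = q xs xs := by
  have hle : q xs y ≤ s * q xs y :=
    (le_of_triangle_of_eq_self h3 hy).trans
      (Function.IsFixedPt.le_mul_of_contracting hcontr hfix y)
  rw [NNReal.eq_zero_of_le_mul_of_lt_one hs hle, hq0]

/-- Let `q` be a partial quasi-metric on `X`, `f` a contraction
(with constant `0 ≤ s < 1`) of the complete partial quasi-metric space `(X,q)`
into itself, with (unique) fixed point `x*` (which satisfies `q(x*,x*) = 0`).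
If `y` satisfies `d_q(f(y), y) = 0` (i.e. `q(f(y),y) = q(f(y),f(y))`) then
`d_q(x*, y) = 0` (i.e. `q(x*, y) = q(x*, x*)`).
Completeness of `(X,q)` means bicompleteness of `d_q(x,y) = q(x,y) - q(x,x)`,
stated as sequential completeness of the symmetrized metric. -/
theorem baire_stmt14 {X : Type*} [Nonempty X] (q : X → X → ℝ≥0)
    (h1 : ∀ x y, q x x ≤ q x y)
    (h2 : ∀ x y, q x x ≤ q y x)
    (h3 : ∀ x y z, q x y + q z z ≤ q x z + q z y)
    (h4 : ∀ x y, (q x x = q x y ∧ q y y = q y x) ↔ x = y)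
    (hcomp : ∀ x : ℕ → X,
      (∀ ε : ℝ≥0, 0 < ε → ∃ N, ∀ m n, N ≤ m → N ≤ n →
        max (q (x m) (x n) - q (x m) (x m)) (q (x n) (x m) - q (x n) (x n)) < ε) →
      ∃ l : X, ∀ ε : ℝ≥0, 0 < ε → ∃ N, ∀ n, N ≤ n →
        max (q l (x n) - q l l) (q (x n) l - q (x n) (x n)) < ε)
    (f : X → X) (s : ℝ≥0) (hs : s < 1)
    (hcontr : ∀ x y, q (f x) (f y) ≤ s * q x y)
    (xs : X) (hfix : f xs = xs) (hq0 : q xs xs = 0)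
    (y : X) (hy : q (f y) y = q (f y) (f y)) :
    q xs y = q xs xs :=
  baire_stmt14_general q h3 f s hs hcontr xs hfix hq0 y hy
end
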